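/- A priori C¹ bound: for any continuous x : [0,∞) → ℝ with x(0)=0 and any t ≥ 0, the function ξ ↦ P_x(ξ,t) satisfies ‖P_x(·,t)‖_{C¹} ≤ e^{−a₀t}‖P₀‖_{C¹} + (1 − e^{−a₀t})(1/(a₀ℓ))‖ω_B‖_{C¹}, where ‖f‖_{C¹} = ‖f‖_∞ + ‖f'‖_∞ (sup norms over one period). In particular sup_{t≥0}‖P_x(·,t)‖_{C¹} ≤ max(‖P₀‖_{C¹}, (1/(a₀ℓ))‖ω_B‖_{C¹}). -/

import Mathlib

/-!
Differentiating under the integral sign shows that `∂_ξ P_x(·,t)` is given by the same formula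
as `P_x(·,t)`, with `P₀` and `ω_B` replaced by their derivatives, so both parts of the `C¹` norm
obey the same estimate. That estimate is the triangle inequality together with
`∫₀ᵗ e^{a₀s} ds = (e^{a₀t} − 1)/a₀`; by periodicity the supremum over one period bounds `P₀`, `ω_B`
and their derivatives everywhere. The bound by the maximum holds because the right-hand side is a
convex combination of `‖P₀‖_{C¹}` and `‖ω_B‖_{C¹}/(a₀ℓ)`.
-/

open Real Set

/-- The explicit integral formula `P_x` for the density of the bottom motor row. -/
noncomputable def Pint (ℓ a₀ : ℝ) (ωB P₀ : ℝ → ℝ) (x : ℝ → ℝ) (ξ t : ℝ) : ℝ :=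
  Real.exp (-a₀ * t) * P₀ (ξ - x t)
    + (Real.exp (-a₀ * t) / ℓ) * ∫ s in (0 : ℝ)..t, Real.exp (a₀ * s) * ωB (ξ + x s - x t)

/-- The `C¹` norm of a function over one period `[0,ℓ]`:
`‖f‖_{C¹} = ‖f‖_∞ + ‖f'‖_∞`. -/
noncomputable def C1Norm (ℓ : ℝ) (f : ℝ → ℝ) : ℝ :=
  (⨆ ξ : Set.Icc (0 : ℝ) ℓ, |f ξ.1|) + ⨆ ξ : Set.Icc (0 : ℝ) ℓ, |deriv f ξ.1|

open MeasureTheory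

theorem Function.Periodic.deriv {f : ℝ → ℝ} {c : ℝ} (h : Function.Periodic f c) :
    Function.Periodic (deriv f) c := fun y => by
  rw [← deriv_comp_add_const, funext h]

noncomputable def periodSup (ℓ : ℝ) (f : ℝ → ℝ) : ℝ :=
  ⨆ ξ : Icc (0 : ℝ) ℓ, |f ξ|

theorem C1Norm_eq (ℓ : ℝ) (f : ℝ → ℝ) : C1Norm ℓ f = periodSup ℓ f + periodSup ℓ (deriv f) :=
  rfl

section periodSup

variable {ℓ : ℝ} {f : ℝ → ℝ}

theorem abs_le_periodSup (hℓ : 0 < ℓ) (hf : Continuous f) (hper : Function.Periodic f ℓ)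
    (y : ℝ) : |f y| ≤ periodSup ℓ f := by
  obtain ⟨z, hz, hzy⟩ := hper.exists_mem_Ico₀ hℓ y
  rw [hzy]
  have hbdd : BddAbove (range fun ξ : Icc (0 : ℝ) ℓ => |f ξ|) :=
    (isCompact_Icc.bddAbove_image hf.abs.continuousOn).mono (image_eq_range (fun z => |f z|) _).ge
  exact le_ciSup hbdd ⟨z, Ico_subset_Icc_self hz⟩

theorem periodSup_le (hℓ : 0 ≤ ℓ) {M : ℝ} (h : ∀ y ∈ Icc 0 ℓ, |f y| ≤ M) : periodSup ℓ f ≤ M :=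
  have : Nonempty (Icc (0 : ℝ) ℓ) := ⟨⟨0, left_mem_Icc.2 hℓ⟩⟩
  ciSup_le fun ξ => h ξ ξ.2

end periodSup

theorem integral_exp_mul {a : ℝ} (ha : a ≠ 0) (b c : ℝ) :
    ∫ s in b..c, exp (a * s) = (exp (a * c) - exp (a * b)) / a := by
  rw [intervalIntegral.integral_comp_mul_left (fun s => exp s) ha, integral_exp, smul_eq_mul,
    inv_mul_eq_div]

theorem abs_integral_exp_mul_le {a t B : ℝ} (ha : 0 < a) (ht : 0 ≤ t) {h : ℝ → ℝ}
    (hB : ∀ s ∈ Ioc 0 t, |h s| ≤ B) :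
    |∫ s in (0 : ℝ)..t, exp (a * s) * h s| ≤ B * (exp (a * t) - 1) / a := by
  calc |∫ s in (0 : ℝ)..t, exp (a * s) * h s|
      ≤ ∫ s in (0 : ℝ)..t, exp (a * s) * B := by
        rw [← norm_eq_abs]
        refine intervalIntegral.norm_integral_le_of_norm_le ht
          (ae_of_all _ fun s hs => ?_) ((by fun_prop : Continuous fun s => exp (a * s) * B)
            |>.intervalIntegrable (μ := volume) 0 t)
        rw [norm_mul, norm_of_nonneg (exp_pos _).le]
        exact mul_le_mul_of_nonneg_left (hB s hs) (exp_pos _).le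
    _ = B * (exp (a * t) - 1) / a := by
        rw [intervalIntegral.integral_mul_const, integral_exp_mul ha.ne', mul_zero, exp_zero]
        ring

theorem abs_Pint_le {ℓ a₀ t A B : ℝ} {ωB P₀ : ℝ → ℝ} (hℓ : 0 < ℓ) (ha₀ : 0 < a₀) (ht : 0 ≤ t)
    (hP₀ : ∀ y, |P₀ y| ≤ A) (hωB : ∀ y, |ωB y| ≤ B) (x : ℝ → ℝ) (ξ : ℝ) :
    |Pint ℓ a₀ ωB P₀ x ξ t|
      ≤ exp (-a₀ * t) * A + (1 - exp (-a₀ * t)) * (1 / (a₀ * ℓ)) * B := by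
  have hI := abs_integral_exp_mul_le ha₀ ht fun s _ => hωB (ξ + x s - x t)
  have hdecay : exp (-a₀ * t) * (exp (a₀ * t) - 1) = 1 - exp (-a₀ * t) := by
    rw [mul_sub, ← exp_add, neg_mul, neg_add_cancel, exp_zero, mul_one]
  calc |Pint ℓ a₀ ωB P₀ x ξ t|
      ≤ exp (-a₀ * t) * |P₀ (ξ - x t)| + exp (-a₀ * t) / ℓ
          * |∫ s in (0 : ℝ)..t, exp (a₀ * s) * ωB (ξ + x s - x t)| := by
        refine (abs_add_le _ _).trans_eq ?_
        rw [abs_mul, abs_mul, abs_of_pos (exp_pos _), abs_of_pos (div_pos (exp_pos _) hℓ)]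
    _ ≤ exp (-a₀ * t) * A + exp (-a₀ * t) / ℓ * (B * (exp (a₀ * t) - 1) / a₀) := by
        gcongr
        exact hP₀ _
    _ = exp (-a₀ * t) * A + (1 - exp (-a₀ * t)) * (1 / (a₀ * ℓ)) * B := by
        rw [← hdecay]
        ring

theorem hasDerivAt_Pint {ℓ a₀ t D : ℝ} {ωB P₀ x : ℝ → ℝ} (hωB : ContDiff ℝ 1 ωB)
    (hD : ∀ y, |deriv ωB y| ≤ D) (hP₀ : Differentiable ℝ P₀) (hx : ContinuousOn x (uIcc 0 t))
    (ξ : ℝ) :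
    HasDerivAt (fun ξ => Pint ℓ a₀ ωB P₀ x ξ t) (Pint ℓ a₀ (deriv ωB) (deriv P₀) x ξ t) ξ := by
  have hcont : ∀ {g : ℝ → ℝ}, Continuous g → ∀ ξ',
      ContinuousOn (fun s => exp (a₀ * s) * g (ξ' + x s - x t)) (uIcc 0 t) := fun hg ξ' => by
    fun_prop
  have hmeas : ∀ {g : ℝ → ℝ}, Continuous g → ∀ ξ', AEStronglyMeasurable
      (fun s => exp (a₀ * s) * g (ξ' + x s - x t)) (volume.restrict (uIoc 0 t)) :=
    fun hg ξ' => ((hcont hg ξ').mono uIoc_subset_uIcc).aestronglyMeasurable measurableSet_uIoc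
  have hderiv_ωB : ∀ y, HasDerivAt ωB (deriv ωB y) y :=
    fun y => (hωB.differentiable one_ne_zero y).hasDerivAt
  have hint : HasDerivAt (fun ξ' => ∫ s in (0 : ℝ)..t, exp (a₀ * s) * ωB (ξ' + x s - x t))
      (∫ s in (0 : ℝ)..t, exp (a₀ * s) * deriv ωB (ξ + x s - x t)) ξ :=
    (intervalIntegral.hasDerivAt_integral_of_dominated_loc_of_deriv_le
      (F' := fun ξ' s => exp (a₀ * s) * deriv ωB (ξ' + x s - x t))
      (bound := fun s => exp (a₀ * s) * D) Filter.univ_mem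
      (.of_forall fun ξ' => hmeas hωB.continuous ξ') (hcont hωB.continuous ξ).intervalIntegrable
      (hmeas (hωB.continuous_deriv le_rfl) ξ)
      (ae_of_all _ fun s _ ξ' _ => by
        rw [norm_mul, norm_of_nonneg (exp_pos _).le, norm_eq_abs]
        exact mul_le_mul_of_nonneg_left (hD _) (exp_pos _).le)
      ((by fun_prop : Continuous fun s => exp (a₀ * s) * D).intervalIntegrable 0 t)
      (ae_of_all _ fun s _ ξ' _ => by
        simpa using ((hderiv_ωB _).comp ξ'
          (((hasDerivAt_id ξ').add_const (x s)).sub_const (x t))).const_mul (exp (a₀ * s)))).2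
  have hP := (hP₀ (ξ - x t)).hasDerivAt.comp_sub_const ξ (x t)
  exact (hP.const_mul (exp (-a₀ * t))).add (hint.const_mul (exp (-a₀ * t) / ℓ))

section

variable {ℓ a₀ : ℝ} {ωB P₀ : ℝ → ℝ}

theorem periodSup_Pint_le (hℓ : 0 < ℓ) (ha₀ : 0 < a₀) (hωB : Continuous ωB)
    (hωBper : Function.Periodic ωB ℓ) (hP₀ : Continuous P₀) (hP₀per : Function.Periodic P₀ ℓ)
    (x : ℝ → ℝ) {t : ℝ} (ht : 0 ≤ t) :
    periodSup ℓ (fun ξ => Pint ℓ a₀ ωB P₀ x ξ t)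
      ≤ exp (-a₀ * t) * periodSup ℓ P₀ + (1 - exp (-a₀ * t)) * (1 / (a₀ * ℓ)) * periodSup ℓ ωB :=
  periodSup_le hℓ.le fun ξ _ => abs_Pint_le hℓ ha₀ ht (abs_le_periodSup hℓ hP₀ hP₀per)
    (abs_le_periodSup hℓ hωB hωBper) x ξ

theorem C1Norm_Pint_le (hℓ : 0 < ℓ) (ha₀ : 0 < a₀) (hωB : ContDiff ℝ 1 ωB)
    (hωBper : Function.Periodic ωB ℓ) (hP₀ : ContDiff ℝ 1 P₀) (hP₀per : Function.Periodic P₀ ℓ)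
    {x : ℝ → ℝ} {t : ℝ} (ht : 0 ≤ t) (hx : ContinuousOn x (Icc 0 t)) :
    C1Norm ℓ (fun ξ => Pint ℓ a₀ ωB P₀ x ξ t)
      ≤ exp (-a₀ * t) * C1Norm ℓ P₀ + (1 - exp (-a₀ * t)) * (1 / (a₀ * ℓ)) * C1Norm ℓ ωB := by
  have hωB' := hωB.continuous_deriv le_rfl
  have hP₀' := hP₀.continuous_deriv le_rfl
  have hderiv : deriv (fun ξ => Pint ℓ a₀ ωB P₀ x ξ t)
      = fun ξ => Pint ℓ a₀ (deriv ωB) (deriv P₀) x ξ t :=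
    funext fun ξ => (hasDerivAt_Pint hωB (abs_le_periodSup hℓ hωB' hωBper.deriv)
      (hP₀.differentiable one_ne_zero) (by rwa [uIcc_of_le ht]) ξ).deriv
  rw [C1Norm_eq, C1Norm_eq, C1Norm_eq, hderiv]
  linear_combination periodSup_Pint_le hℓ ha₀ hωB.continuous hωBper hP₀.continuous hP₀per x ht
    + periodSup_Pint_le hℓ ha₀ hωB' hωBper.deriv hP₀' hP₀per.deriv x ht

end

theorem Pint_apriori_C1_bound_general
    (ℓ a₀ : ℝ) (hℓ : 0 < ℓ) (ha₀ : 0 < a₀)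
    (ωB P₀ : ℝ → ℝ)
    (hωB : ContDiff ℝ 1 ωB) (hωBper : Function.Periodic ωB ℓ)
    (hP₀ : ContDiff ℝ 1 P₀) (hP₀per : Function.Periodic P₀ ℓ)
    (x : ℝ → ℝ) (hx : ContinuousOn x (Ici 0)) :
    (∀ t ∈ Ici (0 : ℝ),
      C1Norm ℓ (fun ξ => Pint ℓ a₀ ωB P₀ x ξ t)
        ≤ Real.exp (-a₀ * t) * C1Norm ℓ P₀
          + (1 - Real.exp (-a₀ * t)) * (1 / (a₀ * ℓ)) * C1Norm ℓ ωB) ∧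
    (∀ t ∈ Ici (0 : ℝ),
      C1Norm ℓ (fun ξ => Pint ℓ a₀ ωB P₀ x ξ t)
        ≤ max (C1Norm ℓ P₀) ((1 / (a₀ * ℓ)) * C1Norm ℓ ωB)) := by
  have hbound := fun t (ht : 0 ≤ t) =>
    C1Norm_Pint_le hℓ ha₀ hωB hωBper hP₀ hP₀per ht (hx.mono Icc_subset_Ici_self)
  refine ⟨hbound, fun t ht => (hbound t ht).trans ?_⟩
  have hdecay : exp (-a₀ * t) ≤ 1 := by
    rw [exp_le_one_iff, neg_mul, neg_nonpos]
    exact mul_nonneg ha₀.le ht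
  rw [mul_assoc (1 - _)]
  exact Convex.combo_le_max _ _ (exp_pos _).le (sub_nonneg.2 hdecay) (add_sub_cancel _ _)

/-- **A priori `C¹` bound**: for any continuous `x : [0,∞) → ℝ` with `x(0) = 0`
and any `t ≥ 0`,
`‖P_x(·,t)‖_{C¹} ≤ e^{−a₀t}‖P₀‖_{C¹} + (1 − e^{−a₀t})(1/(a₀ℓ))‖ω_B‖_{C¹}`;
in particular `sup_{t ≥ 0} ‖P_x(·,t)‖_{C¹} ≤ max(‖P₀‖_{C¹}, (1/(a₀ℓ))‖ω_B‖_{C¹})`. -/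
theorem Pint_apriori_C1_bound
    (ℓ a₀ : ℝ) (hℓ : 0 < ℓ) (ha₀ : 0 < a₀)
    (ωB P₀ : ℝ → ℝ)
    (hωB : ContDiff ℝ 1 ωB) (hωBper : Function.Periodic ωB ℓ)
    (hP₀ : ContDiff ℝ 1 P₀) (hP₀per : Function.Periodic P₀ ℓ)
    (x : ℝ → ℝ) (hx : ContinuousOn x (Ici 0)) (hx0 : x 0 = 0) :
    (∀ t ∈ Ici (0 : ℝ),
      C1Norm ℓ (fun ξ => Pint ℓ a₀ ωB P₀ x ξ t)
        ≤ Real.exp (-a₀ * t) * C1Norm ℓ P₀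
          + (1 - Real.exp (-a₀ * t)) * (1 / (a₀ * ℓ)) * C1Norm ℓ ωB) ∧
    (∀ t ∈ Ici (0 : ℝ),
      C1Norm ℓ (fun ξ => Pint ℓ a₀ ωB P₀ x ξ t)
        ≤ max (C1Norm ℓ P₀) ((1 / (a₀ * ℓ)) * C1Norm ℓ ωB)) :=
  Pint_apriori_C1_bound_general ℓ a₀ hℓ ha₀ ωB P₀ hωB hωBper hP₀ hP₀per x hx
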